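/- arXiv:1406.4222 — 4 statements merged into one kernel-verified Lean document; each statement's English description precedes it below -/
import Mathlib

section
/- There exists a random variable $X$ with positive mean and $\hat{\alpha} := \sup\{\alpha \geq 0 : \mathbb{E}[e^{-\alpha X}] \leq 1\} \in (0,\infty)$ such that $\mathbb{E}[e^{-\hat{\alpha} X}] < 1$ strictly. Concretely, the discrete random variable with $\mathbb{P}(X = -n) = n^{-2}e^{-3n-3}$ for each positive integer $n$ and $\mathbb{P}(X = 3) = 1 - \sum_{n=1}^{\infty} n^{-2}e^{-3n-3}$ satisfies $\hat{\alpha} = 3$, $\mathbb{E}[e^{-\alpha X}] < 1$ for $0 < \alpha \leq 3$, and $\mathbb{E}[e^{-\alpha X}] = +\infty$ for $\alpha > 3$. -/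
open MeasureTheory ENNReal Real Filter

variable {Ω : Type*} [MeasurableSpace Ω]

/-- `emg μ X α = 𝔼[e^{-α X}]` as a value in `[0,∞]`. -/
noncomputable def emg (μ : Measure Ω) (X : Ω → ℝ) (α : ℝ) : ℝ≥0∞ :=
  ∫⁻ ω, ENNReal.ofReal (Real.exp (-α * X ω)) ∂μ

/-- `α̂ = sup {α ≥ 0 : 𝔼[e^{-α X}] ≤ 1}` as a value in `[0,∞]`. -/
noncomputable def alphaHat (μ : Measure Ω) (X : Ω → ℝ) : ℝ≥0∞ :=
  sSup (ENNReal.ofReal '' {α : ℝ | 0 ≤ α ∧ emg μ X α ≤ 1})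

/-- The duality index `R(X) = α̂⁻¹` (conventions `0⁻¹ = ∞`, `∞⁻¹ = 0`). -/
noncomputable def dualityIndex (μ : Measure Ω) (X : Ω → ℝ) : ℝ≥0∞ :=
  (alphaHat μ X)⁻¹

/-- The mean of `X` is well defined: `𝔼[X⁻] < ∞` or `𝔼[X⁺] < ∞`. -/
def HasWellDefinedMean (μ : Measure Ω) (X : Ω → ℝ) : Prop :=
  (∫⁻ ω, ENNReal.ofReal (max (-X ω) 0) ∂μ) < ⊤ ∨
    (∫⁻ ω, ENNReal.ofReal (max (X ω) 0) ∂μ) < ⊤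

/-!
The atom at `-n` has mass `n⁻² e^{-3n-3}`, so `e^{αn} P(X = -n) = e^{-3} e^{(α-3)n} / n²`: summable
for `α = 3` (with sum `e^{-3} π²/6`, which is small) and unbounded for `α > 3`. Hence
`𝔼[e^{-3X}] ≤ e^{-9} + e^{-3} π²/6 < 1` while `𝔼[e^{-αX}] = ∞` beyond `3`. Convexity of
`α ↦ 𝔼[e^{-αX}]`, which equals `1` at `0`, gives `𝔼[e^{-αX}] < 1` on `(0, 3]`, and
`1 - 3X ≤ e^{-3X}` gives `1 - 3 𝔼[X] < 1`, i.e. a positive mean.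
-/

section Emg

variable {μ : Measure Ω} {X : Ω → ℝ}

lemma emg_mul_le_of_convex [IsProbabilityMeasure μ] {t : ℝ} (ht₀ : 0 ≤ t) (ht₁ : t ≤ 1) (β : ℝ) :
    emg μ X (t * β) ≤ ENNReal.ofReal (1 - t) + ENNReal.ofReal t * emg μ X β := by
  have hpoint : ∀ ω, ENNReal.ofReal (Real.exp (-(t * β) * X ω)) ≤
      ENNReal.ofReal (1 - t) + ENNReal.ofReal t * ENNReal.ofReal (Real.exp (-β * X ω)) := by
    intro ω
    have hconv := convexOn_exp.2 (Set.mem_univ (-β * X ω)) (Set.mem_univ 0) ht₀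
      (sub_nonneg.2 ht₁) (add_sub_cancel t 1)
    simp only [smul_eq_mul, mul_zero, add_zero, Real.exp_zero, mul_one] at hconv
    rw [← ENNReal.ofReal_mul ht₀, ← ENNReal.ofReal_add (sub_nonneg.2 ht₁) (by positivity),
      show -(t * β) * X ω = t * (-β * X ω) by ring]
    exact ENNReal.ofReal_le_ofReal (by linarith)
  calc emg μ X (t * β) ≤ ∫⁻ ω, ENNReal.ofReal (1 - t) +
        ENNReal.ofReal t * ENNReal.ofReal (Real.exp (-β * X ω)) ∂μ := lintegral_mono hpoint
    _ = ENNReal.ofReal (1 - t) + ENNReal.ofReal t * emg μ X β := by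
      rw [lintegral_add_left measurable_const, lintegral_const, measure_univ, mul_one,
        lintegral_const_mul' _ _ ofReal_ne_top, emg]

lemma emg_lt_one_of_le [IsProbabilityMeasure μ] {α β : ℝ} (hα : 0 < α) (hαβ : α ≤ β)
    (hβ : emg μ X β < 1) : emg μ X α < 1 := by
  set t := α / β
  have hβ₀ : 0 < β := hα.trans_le hαβ
  have ht₀ : 0 < t := div_pos hα hβ₀
  have ht₁ : t ≤ 1 := (div_le_one hβ₀).2 hαβ
  calc emg μ X α = emg μ X (t * β) := by rw [div_mul_cancel₀ α hβ₀.ne']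
    _ ≤ ENNReal.ofReal (1 - t) + ENNReal.ofReal t * emg μ X β := emg_mul_le_of_convex ht₀.le ht₁ β
    _ < ENNReal.ofReal (1 - t) + ENNReal.ofReal t * 1 := by
      gcongr <;> exact ofReal_ne_top
    _ = 1 := by rw [mul_one, ← ENNReal.ofReal_add (sub_nonneg.2 ht₁) ht₀.le, sub_add_cancel,
      ofReal_one]

lemma alphaHat_eq_ofReal {β : ℝ} (hβ₀ : 0 ≤ β) (hβ : emg μ X β ≤ 1)
    (htop : ∀ α, β < α → emg μ X α = ⊤) : alphaHat μ X = ENNReal.ofReal β := by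
  refine IsGreatest.csSup_eq ⟨⟨β, ⟨hβ₀, hβ⟩, rfl⟩, ?_⟩
  rintro _ ⟨α, ⟨-, hα⟩, rfl⟩
  refine ENNReal.ofReal_le_ofReal (le_of_not_gt fun hβα => ?_)
  simp [htop α hβα] at hα

lemma integrable_exp_of_emg_ne_top (hX : AEStronglyMeasurable X μ) {β : ℝ} (h : emg μ X β ≠ ⊤) :
    Integrable (fun ω => Real.exp (-β * X ω)) μ :=
  ⟨continuous_exp.comp_aestronglyMeasurable (hX.const_mul (-β)),
    (hasFiniteIntegral_iff_ofReal (ae_of_all _ fun _ => (Real.exp_pos _).le)).2 h.lt_top⟩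

/-- The dominating function is `|C| + β⁻¹ e^{-βX}`, from `βy ≤ e^{βy}` for `y = -X`. -/
lemma integrable_of_le_of_emg_ne_top [IsFiniteMeasure μ] (hX : AEStronglyMeasurable X μ) {C β : ℝ}
    (hC : ∀ ω, X ω ≤ C) (hβ : 0 < β) (h : emg μ X β ≠ ⊤) : Integrable X μ := by
  refine ((integrable_const |C|).add ((integrable_exp_of_emg_ne_top hX h).const_mul β⁻¹)).mono' hX
    (ae_of_all _ fun ω => ?_)
  have hexp : β * -X ω ≤ Real.exp (-β * X ω) := by
    nlinarith [Real.add_one_le_exp (-β * X ω)]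
  have hexp' : -X ω ≤ β⁻¹ * Real.exp (-β * X ω) := (le_inv_mul_iff₀ hβ).2 hexp
  have hpos : 0 ≤ β⁻¹ * Real.exp (-β * X ω) := by positivity
  rw [Pi.add_apply, Real.norm_eq_abs, abs_le]
  constructor <;> linarith [abs_nonneg C, le_abs_self C, hC ω]

lemma integral_pos_of_emg_lt_one [IsProbabilityMeasure μ] (hX : Integrable X μ) {β : ℝ}
    (hβ : 0 < β) (h : emg μ X β < 1) : 0 < ∫ ω, X ω ∂μ := by
  have hexp := integrable_exp_of_emg_ne_top hX.aestronglyMeasurable (h.trans one_lt_top).ne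
  have hlin : ∫ ω, (1 - β * X ω) ∂μ = 1 - β * ∫ ω, X ω ∂μ := by
    rw [integral_sub (integrable_const 1) (hX.const_mul β), integral_const, integral_const_mul]
    simp
  have hmono : ∫ ω, (1 - β * X ω) ∂μ ≤ ∫ ω, Real.exp (-β * X ω) ∂μ :=
    integral_mono ((integrable_const 1).sub (hX.const_mul β)) hexp
      fun ω => by linarith [Real.add_one_le_exp (-β * X ω)]
  have hemg : ∫ ω, Real.exp (-β * X ω) ∂μ < 1 := by
    rw [integral_eq_lintegral_of_nonneg_ae (ae_of_all _ fun _ => (Real.exp_pos _).le)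
      hexp.aestronglyMeasurable]
    exact toReal_lt_of_lt_ofReal (by rwa [ofReal_one])
  by_contra hneg
  nlinarith

end Emg

lemma ENNReal.tsum_ofReal_eq_top_of_tendsto_atTop {f : ℕ → ℝ} (hf : Tendsto f atTop atTop) :
    ∑' n, ENNReal.ofReal (f n) = ⊤ := by
  by_contra h
  have hzero := ENNReal.tendsto_cofinite_zero_of_tsum_ne_top h
  rw [Nat.cofinite_eq_atTop] at hzero
  exact zero_ne_top (tendsto_nhds_unique hzero (ENNReal.tendsto_ofReal_atTop.comp hf))

lemma hasSum_inv_succ_sq : HasSum (fun n : ℕ => 1 / ((n : ℝ) + 1) ^ 2) (π ^ 2 / 6) := by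
  have h := (hasSum_nat_add_iff' 1).2 hasSum_zeta_two
  simpa using h

lemma tsum_inv_succ_sq_le_two : ∑' n : ℕ, 1 / ((n : ℝ) + 1) ^ 2 ≤ 2 := by
  rw [hasSum_inv_succ_sq.tsum_eq]
  nlinarith [Real.pi_lt_d2, Real.pi_pos]

lemma exp_neg_three_lt : Real.exp (-3) < 1 / 4 := by
  rw [Real.exp_neg, one_div]
  exact inv_strictAnti₀ (by norm_num) (by linarith [Real.add_one_lt_exp (x := 3) (by norm_num)])

namespace HeavyLeftTail

noncomputable section

def tailMass (n : ℕ) : ℝ := ((n : ℝ) + 1) ^ (-2 : ℤ) * Real.exp (-3 * ((n : ℝ) + 1) - 3)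

def tailTotal : ℝ≥0∞ := ∑' n, ENNReal.ofReal (tailMass n)

lemma tailMass_mul_exp (α : ℝ) (n : ℕ) :
    tailMass n * Real.exp (α * ((n : ℝ) + 1)) =
      Real.exp (-3) * (Real.exp ((α - 3) * ((n : ℝ) + 1)) / ((n : ℝ) + 1) ^ 2) := by
  rw [tailMass, zpow_neg, zpow_ofNat, mul_assoc, ← Real.exp_add, div_eq_inv_mul,
    ← mul_assoc, mul_comm _ (_⁻¹), mul_assoc, ← Real.exp_add]
  ring_nf

def criticalTail : ℝ := Real.exp (-3) * ∑' n : ℕ, 1 / ((n : ℝ) + 1) ^ 2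

lemma criticalTail_nonneg : 0 ≤ criticalTail := by
  unfold criticalTail; positivity

lemma criticalTail_lt : criticalTail < 1 / 2 := by
  unfold criticalTail
  nlinarith [tsum_inv_succ_sq_le_two, exp_neg_three_lt, Real.exp_pos (-3)]

lemma tsum_tailMass_mul_exp_three :
    ∑' n, ENNReal.ofReal (tailMass n * Real.exp (3 * ((n : ℝ) + 1))) =
      ENNReal.ofReal criticalTail := by
  simp only [tailMass_mul_exp, sub_self, zero_mul, Real.exp_zero]
  rw [criticalTail, ← tsum_mul_left,
    ENNReal.ofReal_tsum_of_nonneg (fun n => by positivity) (hasSum_inv_succ_sq.summable.mul_left _)]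

lemma tailTotal_le : tailTotal ≤ ENNReal.ofReal criticalTail := by
  rw [← tsum_tailMass_mul_exp_three]
  refine ENNReal.tsum_le_tsum fun n => ENNReal.ofReal_le_ofReal ?_
  have htail : 0 ≤ tailMass n := by unfold tailMass; positivity
  exact le_mul_of_one_le_right htail (Real.one_le_exp (by positivity))

lemma tailTotal_le_one : tailTotal ≤ 1 :=
  tailTotal_le.trans (ofReal_le_one.2 (criticalTail_lt.le.trans (by norm_num)))

/-- Index `0` carries the atom at `3`, index `n + 1` the atom at `-(n + 1)`. -/
def weight : ℕ → ℝ≥0∞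
  | 0 => 1 - tailTotal
  | n + 1 => ENNReal.ofReal (tailMass n)

def value : ℕ → ℝ
  | 0 => 3
  | n + 1 => -((n : ℝ) + 1)

lemma tsum_weight : ∑' n, weight n = 1 := by
  rw [tsum_eq_zero_add' ENNReal.summable]
  exact tsub_add_cancel_of_le tailTotal_le_one

def law : PMF ℕ := ⟨weight, ENNReal.summable.hasSum_iff.2 tsum_weight⟩

lemma value_injective : Function.Injective value := by
  rintro (_ | m) (_ | n) h <;> simp only [value] at h
  · rfl
  · linarith [n.cast_nonneg (α := ℝ)]
  · linarith [m.cast_nonneg (α := ℝ)]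
  · simpa using h

lemma law_value_eq (k : ℕ) : law.toMeasure {ω | value ω = value k} = weight k := by
  simp only [value_injective.eq_iff, Set.ofPred_eq_eq_singleton]
  exact law.toMeasure_apply_singleton k (measurableSet_singleton k)

lemma value_le_three (k : ℕ) : value k ≤ 3 := by
  cases k with
  | zero => exact le_rfl
  | succ n => simp only [value]; linarith [n.cast_nonneg (α := ℝ)]

lemma emg_law (α : ℝ) :
    emg law.toMeasure value α = ENNReal.ofReal (Real.exp (-α * 3)) * (1 - tailTotal) +
      ∑' n, ENNReal.ofReal (tailMass n * Real.exp (α * ((n : ℝ) + 1))) := by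
  rw [emg, lintegral_countable', tsum_eq_zero_add' ENNReal.summable]
  simp only [law.toMeasure_apply_singleton _ (measurableSet_singleton _)]
  congr 1
  refine tsum_congr fun n => ?_
  change ENNReal.ofReal _ * ENNReal.ofReal (tailMass n) = _
  rw [mul_comm, ← ENNReal.ofReal_mul (by unfold tailMass; positivity)]
  congr 3
  simp only [value]; ring

lemma emg_law_three_lt_one : emg law.toMeasure value 3 < 1 := by
  rw [emg_law, tsum_tailMass_mul_exp_three]
  calc ENNReal.ofReal (Real.exp (-3 * 3)) * (1 - tailTotal) + ENNReal.ofReal criticalTail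
      ≤ ENNReal.ofReal (Real.exp (-3)) + ENNReal.ofReal criticalTail := by
        gcongr
        calc _ ≤ ENNReal.ofReal (Real.exp (-3 * 3)) * 1 := by gcongr; exact tsub_le_self
          _ ≤ _ := by rw [mul_one]; gcongr; norm_num
    _ < 1 := by
      rw [← ENNReal.ofReal_add (Real.exp_pos _).le criticalTail_nonneg, ← ofReal_one,
        ENNReal.ofReal_lt_ofReal_iff one_pos]
      linarith [exp_neg_three_lt, criticalTail_lt]

lemma emg_law_eq_top {α : ℝ} (hα : 3 < α) : emg law.toMeasure value α = ⊤ := by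
  rw [emg_law, ENNReal.tsum_ofReal_eq_top_of_tendsto_atTop, add_top]
  simp only [tailMass_mul_exp]
  refine Tendsto.const_mul_atTop (Real.exp_pos _) ?_
  have h := (tendsto_exp_mul_div_rpow_atTop 2 (α - 3) (sub_pos.2 hα)).comp
    (tendsto_atTop_add_const_right _ 1 tendsto_natCast_atTop_atTop)
  simpa [Function.comp_def] using h

end

end HeavyLeftTail

open HeavyLeftTail in
theorem stmt_7 :
    ∃ (Ω' : Type) (_ : MeasurableSpace Ω') (μ : Measure Ω') (_ : IsProbabilityMeasure μ)
      (X : Ω' → ℝ), Measurable X ∧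
      (∀ n : ℕ, 1 ≤ n →
        μ {ω | X ω = -(n : ℝ)} = ENNReal.ofReal ((n : ℝ) ^ (-2 : ℤ) * Real.exp (-3 * n - 3))) ∧
      μ {ω | X ω = 3} =
        1 - ∑' n : ℕ, ENNReal.ofReal (((n : ℝ) + 1) ^ (-2 : ℤ) * Real.exp (-3 * ((n : ℝ) + 1) - 3)) ∧
      0 < ∫ ω, X ω ∂μ ∧
      alphaHat μ X = 3 ∧
      (∀ α : ℝ, 0 < α → α ≤ 3 → emg μ X α < 1) ∧
      (∀ α : ℝ, 3 < α → emg μ X α = ⊤) := by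
  have hintegrable : Integrable value law.toMeasure :=
    integrable_of_le_of_emg_ne_top measurable_from_nat.aestronglyMeasurable value_le_three
      three_pos (emg_law_three_lt_one.trans one_lt_top).ne
  refine ⟨ℕ, inferInstance, law.toMeasure, inferInstance, value, measurable_from_nat, ?_,
    law_value_eq 0, integral_pos_of_emg_lt_one hintegrable three_pos emg_law_three_lt_one, ?_,
    fun α hα hα3 => emg_lt_one_of_le hα hα3 emg_law_three_lt_one, fun α => emg_law_eq_top⟩
  · intro n hn
    obtain ⟨m, rfl⟩ := Nat.exists_eq_add_of_le' hn
    rw [show -((m + 1 : ℕ) : ℝ) = value (m + 1) by simp [value], law_value_eq]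
    simp only [weight, tailMass]
    push_cast
    rfl
  · rw [alphaHat_eq_ofReal zero_le_three emg_law_three_lt_one.le fun α => emg_law_eq_top,
      ofReal_ofNat]
end

section
/- The duality index is subadditive: for any random variables $X, Y$ (with means well-defined), $\mathcal{R}(X+Y) \leq \mathcal{R}(X) + \mathcal{R}(Y)$, where the index of a sum not having a well-defined mean is taken to be $+\infty$. -/
/-!
`R(X)` is the infimum of `1/α` over the admissible `α ≥ 0`, those with `𝔼[e^{-αX}] ≤ 1`. By
convexity of `exp`, `e^{-γ(x+y)} ≤ (γ/α) e^{-αx} + (γ/β) e^{-βy}` for `γ = αβ/(α+β)`, since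
`γ/α + γ/β = 1`; so if `α` is admissible for `X` and `β` for `Y`, then `γ` is admissible for
`X + Y`, and `1/γ = 1/α + 1/β`. Taking infima gives `R(X+Y) ≤ R(X) + R(Y)`.
-/

open MeasureTheory ENNReal Real Filter

variable {Ω : Type*} [MeasurableSpace Ω]

theorem exp_neg_mul_add_le {a b : ℝ} (ha : 0 < a) (hb : 0 < b) (x y : ℝ) :
    exp (-(a * b / (a + b)) * (x + y)) ≤
      b / (a + b) * exp (-a * x) + a / (a + b) * exp (-b * y) := by
  have hab : 0 < a + b := by positivity
  calc exp (-(a * b / (a + b)) * (x + y))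
      = exp ((b / (a + b)) • (-a * x) + (a / (a + b)) • (-b * y)) := by
        rw [smul_eq_mul, smul_eq_mul]; congr 1; field_simp; ring
    _ ≤ _ := convexOn_exp.2 (Set.mem_univ _) (Set.mem_univ _) (div_pos hb hab).le
        (div_pos ha hab).le (by field_simp; ring)

lemma emg_add_le (μ : Measure Ω) {X Y : Ω → ℝ} (hX : AEMeasurable X μ) (hY : AEMeasurable Y μ)
    {a b : ℝ} (ha : 0 < a) (hb : 0 < b) :
    emg μ (fun ω => X ω + Y ω) (a * b / (a + b)) ≤
      ENNReal.ofReal (b / (a + b)) * emg μ X a + ENNReal.ofReal (a / (a + b)) * emg μ Y b := by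
  unfold emg
  rw [← lintegral_const_mul'' _ (by fun_prop), ← lintegral_const_mul'' _ (by fun_prop),
    ← lintegral_add_left' (by fun_prop)]
  refine lintegral_mono fun ω => ?_
  rw [← ENNReal.ofReal_mul (by positivity), ← ENNReal.ofReal_mul (by positivity),
    ← ENNReal.ofReal_add (by positivity) (by positivity)]
  exact ENNReal.ofReal_le_ofReal (exp_neg_mul_add_le ha hb _ _)

lemma emg_add_le_one (μ : Measure Ω) {X Y : Ω → ℝ} (hX : AEMeasurable X μ) (hY : AEMeasurable Y μ)
    {a b : ℝ} (ha : 0 < a) (hb : 0 < b) (hXa : emg μ X a ≤ 1) (hYb : emg μ Y b ≤ 1) :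
    emg μ (fun ω => X ω + Y ω) (a * b / (a + b)) ≤ 1 := by
  have hab : 0 < a + b := by positivity
  calc emg μ (fun ω => X ω + Y ω) (a * b / (a + b))
      ≤ ENNReal.ofReal (b / (a + b)) * 1 + ENNReal.ofReal (a / (a + b)) * 1 := by
        grw [emg_add_le μ hX hY ha hb, hXa, hYb]
    _ = 1 := by
        rw [mul_one, mul_one, ← ENNReal.ofReal_add (by positivity) (by positivity), ← add_div,
          add_comm, div_self hab.ne', ENNReal.ofReal_one]

lemma dualityIndex_eq_iInf (μ : Measure Ω) (X : Ω → ℝ) :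
    dualityIndex μ X = ⨅ α ∈ {α : ℝ | 0 ≤ α ∧ emg μ X α ≤ 1}, (ENNReal.ofReal α)⁻¹ := by
  rw [dualityIndex, alphaHat, ENNReal.inv_sSup, iInf_image]

lemma dualityIndex_le_inv_ofReal (μ : Measure Ω) {X : Ω → ℝ} {α : ℝ} (hα : 0 ≤ α)
    (hXα : emg μ X α ≤ 1) : dualityIndex μ X ≤ (ENNReal.ofReal α)⁻¹ := by
  rw [dualityIndex_eq_iInf]
  exact iInf₂_le α ⟨hα, hXα⟩

lemma ENNReal.inv_ofReal_mul_div_add {a b : ℝ} (ha : 0 < a) (hb : 0 < b) :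
    (ENNReal.ofReal (a * b / (a + b)))⁻¹ = (ENNReal.ofReal a)⁻¹ + (ENNReal.ofReal b)⁻¹ := by
  rw [← ENNReal.ofReal_inv_of_pos ha, ← ENNReal.ofReal_inv_of_pos hb,
    ← ENNReal.ofReal_add (by positivity) (by positivity),
    ← ENNReal.ofReal_inv_of_pos (by positivity)]
  congr 1
  field_simp
  ring

theorem stmt_9_general (μ : Measure Ω) (X Y : Ω → ℝ)
    (hX : Measurable X) (hY : Measurable Y) :
    dualityIndex μ (fun ω => X ω + Y ω) ≤ dualityIndex μ X + dualityIndex μ Y := by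
  rw [dualityIndex_eq_iInf μ X, dualityIndex_eq_iInf μ Y]
  refine ENNReal.le_iInf₂_add_iInf₂ fun a ⟨ha0, hXa⟩ b ⟨hb0, hYb⟩ => ?_
  rcases ha0.eq_or_lt with rfl | ha
  · simp
  rcases hb0.eq_or_lt with rfl | hb
  · simp
  rw [← ENNReal.inv_ofReal_mul_div_add ha hb]
  exact dualityIndex_le_inv_ofReal μ (by positivity)
    (emg_add_le_one μ hX.aemeasurable hY.aemeasurable ha hb hXa hYb)

theorem stmt_9 (μ : Measure Ω) [IsProbabilityMeasure μ] (X Y : Ω → ℝ)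
    (hX : Measurable X) (hY : Measurable Y) :
    dualityIndex μ (fun ω => X ω + Y ω) ≤ dualityIndex μ X + dualityIndex μ Y :=
  stmt_9_general μ X Y hX hY
end

section
/- Fix $y > 0$, a concave strictly increasing utility $u$ with $u(0)=0$, and pricing kernel $\rho > 0$ with $\mathbb{E}[\rho]=1$. Define $\varphi(\alpha) = \inf\{\mathbb{E}[e^{-\alpha u(Y)}] : Y \in L^1, \mathbb{E}[\rho Y] = -y\}$ for $\alpha > 0$ and $\varphi(0) = 1$. Then $\varphi$ is convex on $[0, \infty)$. -/
open MeasureTheory ENNReal Real Filter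

variable {Ω : Type*} [MeasurableSpace Ω]

/-! The budget set is convex: if `Y` and `Y'` are feasible, so is `Z = β Y + (1 - β) Y'` with
`β = k a / (k a + (1 - k) b)`. Concavity of `u` gives
`(k a + (1 - k) b) u(Z) ≥ k a u(Y) + (1 - k) b u(Y')`, and convexity of `exp` then bounds
`e^{-(k a + (1 - k) b) u(Z)}` pointwise by `k e^{-a u(Y)} + (1 - k) e^{-b u(Y')}`.
Integrating and taking infima over `Y` and `Y'` gives convexity of `φ`. -/

theorem ENNReal.le_mul_iInf_add_mul_iInf {ι κ : Sort*} [Nonempty ι] [Nonempty κ]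
    {x a b : ℝ≥0∞} {f : ι → ℝ≥0∞} {g : κ → ℝ≥0∞} (ha : a ≠ ∞) (hb : b ≠ ∞)
    (h : ∀ i j, x ≤ a * f i + b * g j) : x ≤ a * (⨅ i, f i) + b * ⨅ j, g j := by
  rw [ENNReal.mul_iInf (by simp [ha]), ENNReal.mul_iInf (by simp [hb]), ENNReal.iInf_add]
  refine le_iInf fun i => ?_
  rw [ENNReal.add_iInf]
  exact le_iInf (h i)

theorem exists_mixing_weight {a b k : ℝ} (ha : 0 ≤ a) (hb : 0 ≤ b) (hk0 : 0 ≤ k)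
    (hk1 : k ≤ 1) :
    ∃ β : ℝ, 0 ≤ β ∧ β ≤ 1 ∧ (k * a + (1 - k) * b) * β = k * a := by
  have hka : 0 ≤ k * a := mul_nonneg hk0 ha
  have hkb : 0 ≤ (1 - k) * b := mul_nonneg (by linarith) hb
  rcases (add_nonneg hka hkb).eq_or_lt with hc | hc
  · exact ⟨0, le_rfl, zero_le_one, by linarith⟩
  · refine ⟨k * a / (k * a + (1 - k) * b), div_nonneg hka hc.le, ?_, mul_div_cancel₀ _ hc.ne'⟩
    rw [div_le_one hc]
    linarith

theorem ConcaveOn.exp_neg_mul_comp_add_le {u : ℝ → ℝ} (hu : ConcaveOn ℝ Set.univ u)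
    {a b k β : ℝ} (ha : 0 ≤ a) (hb : 0 ≤ b) (hk0 : 0 ≤ k) (hk1 : k ≤ 1) (hβ0 : 0 ≤ β)
    (hβ1 : β ≤ 1) (hβ : (k * a + (1 - k) * b) * β = k * a) (x x' : ℝ) :
    Real.exp (-(k * a + (1 - k) * b) * u (β * x + (1 - β) * x')) ≤
      k * Real.exp (-a * u x) + (1 - k) * Real.exp (-b * u x') := by
  have hc : 0 ≤ k * a + (1 - k) * b :=
    add_nonneg (mul_nonneg hk0 ha) (mul_nonneg (by linarith) hb)
  have hconc : β * u x + (1 - β) * u x' ≤ u (β * x + (1 - β) * x') :=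
    hu.2 (Set.mem_univ x) (Set.mem_univ x') hβ0 (by linarith) (by ring)
  calc Real.exp (-(k * a + (1 - k) * b) * u (β * x + (1 - β) * x'))
      ≤ Real.exp (k * (-a * u x) + (1 - k) * (-b * u x')) := by
        rw [Real.exp_le_exp]
        linear_combination mul_le_mul_of_nonneg_left hconc hc + (u x' - u x) * hβ
    _ ≤ k * Real.exp (-a * u x) + (1 - k) * Real.exp (-b * u x') :=
        convexOn_exp.2 (Set.mem_univ _) (Set.mem_univ _) hk0 (by linarith) (by ring)

section Budget

variable (μ : Measure Ω) (ρ : Ω → ℝ) (y : ℝ)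

def budgetSet : Set (Ω → ℝ) :=
  {Y | Integrable Y μ ∧ Integrable (fun ω => ρ ω * Y ω) μ ∧ ∫ ω, ρ ω * Y ω ∂μ = -y}

theorem convex_budgetSet : Convex ℝ (budgetSet μ ρ y) := by
  rintro Y ⟨hY, hρY, hYy⟩ Y' ⟨hY', hρY', hY'y⟩ s t - - hst
  have hmix : (fun ω => ρ ω * (s • Y + t • Y') ω)
      = fun ω => s * (ρ ω * Y ω) + t * (ρ ω * Y' ω) := by
    funext ω
    simp only [Pi.add_apply, Pi.smul_apply, smul_eq_mul]
    ring
  refine ⟨(hY.smul s).add (hY'.smul t), ?_, ?_⟩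
  · rw [hmix]
    exact (hρY.const_mul s).add (hρY'.const_mul t)
  · rw [hmix, integral_add (hρY.const_mul s) (hρY'.const_mul t), integral_const_mul,
      integral_const_mul, hYy, hY'y]
    linear_combination (-y) * hst

theorem const_mem_budgetSet [IsFiniteMeasure μ] (hρint : Integrable ρ μ)
    (hρ1 : ∫ ω, ρ ω ∂μ = 1) : (fun _ => -y) ∈ budgetSet μ ρ y := by
  refine ⟨integrable_const _, hρint.mul_const _, ?_⟩
  rw [integral_mul_const, hρ1, one_mul]

end Budget

theorem lintegral_ofReal_le_add {μ : Measure Ω} {f g h : Ω → ℝ} {p q : ℝ} (hp : 0 ≤ p)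
    (hq : 0 ≤ q) (hf : AEMeasurable f μ) (hf0 : ∀ ω, 0 ≤ f ω) (hg0 : ∀ ω, 0 ≤ g ω)
    (hh : ∀ ω, h ω ≤ p * f ω + q * g ω) :
    ∫⁻ ω, ENNReal.ofReal (h ω) ∂μ ≤
      ENNReal.ofReal p * ∫⁻ ω, ENNReal.ofReal (f ω) ∂μ +
        ENNReal.ofReal q * ∫⁻ ω, ENNReal.ofReal (g ω) ∂μ := by
  calc ∫⁻ ω, ENNReal.ofReal (h ω) ∂μ
      ≤ ∫⁻ ω, ENNReal.ofReal p * ENNReal.ofReal (f ω) +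
          ENNReal.ofReal q * ENNReal.ofReal (g ω) ∂μ := by
        refine lintegral_mono fun ω => ?_
        rw [← ENNReal.ofReal_mul hp, ← ENNReal.ofReal_mul hq,
          ← ENNReal.ofReal_add (mul_nonneg hp (hf0 ω)) (mul_nonneg hq (hg0 ω))]
        exact ENNReal.ofReal_le_ofReal (hh ω)
    _ = _ := by
        rw [lintegral_add_left' (hf.ennreal_ofReal.const_mul _),
          lintegral_const_mul' _ _ ENNReal.ofReal_ne_top,
          lintegral_const_mul' _ _ ENNReal.ofReal_ne_top]

theorem ConcaveOn.exists_mem_budgetSet_lintegral_exp_le {μ : Measure Ω} {ρ : Ω → ℝ} {y : ℝ}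
    {u : ℝ → ℝ} (hu : ConcaveOn ℝ Set.univ u) {a b k : ℝ} (ha : 0 ≤ a) (hb : 0 ≤ b)
    (hk0 : 0 ≤ k) (hk1 : k ≤ 1) {Y Y' : Ω → ℝ} (hY : Y ∈ budgetSet μ ρ y)
    (hY' : Y' ∈ budgetSet μ ρ y) :
    ∃ Z ∈ budgetSet μ ρ y,
      ∫⁻ ω, ENNReal.ofReal (Real.exp (-(k * a + (1 - k) * b) * u (Z ω))) ∂μ ≤
        ENNReal.ofReal k * ∫⁻ ω, ENNReal.ofReal (Real.exp (-a * u (Y ω))) ∂μ +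
          ENNReal.ofReal (1 - k) * ∫⁻ ω, ENNReal.ofReal (Real.exp (-b * u (Y' ω))) ∂μ := by
  obtain ⟨β, hβ0, hβ1, hβ⟩ := exists_mixing_weight ha hb hk0 hk1
  have hum : Measurable u := (continuousOn_univ.1 (hu.continuousOn isOpen_univ)).measurable
  have hexp : AEMeasurable (fun ω => Real.exp (-a * u (Y ω))) μ :=
    (Real.measurable_exp.comp (hum.const_mul _)).comp_aemeasurable hY.1.aemeasurable
  refine ⟨β • Y + (1 - β) • Y',
    convex_budgetSet μ ρ y hY hY' hβ0 (by linarith) (by ring), ?_⟩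
  exact lintegral_ofReal_le_add hk0 (by linarith) hexp (fun _ => (Real.exp_pos _).le)
    (fun _ => (Real.exp_pos _).le)
    (fun ω => hu.exp_neg_mul_comp_add_le ha hb hk0 hk1 hβ0 hβ1 hβ (Y ω) (Y' ω))

theorem stmt_16_general (μ : Measure Ω) [IsProbabilityMeasure μ]
    (u : ℝ → ℝ) (hu : ConcaveOn ℝ Set.univ u)
    (ρ : Ω → ℝ)
    (hρint : Integrable ρ μ) (hρ1 : ∫ ω, ρ ω ∂μ = 1)
    (y : ℝ)
    (φ : ℝ → ℝ≥0∞)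
    (hφ : ∀ α : ℝ, φ α =
      ⨅ (Y : {Y : Ω → ℝ // Integrable Y μ ∧ Integrable (fun ω => ρ ω * Y ω) μ ∧
          (∫ ω, ρ ω * Y ω ∂μ) = -y}),
        ∫⁻ ω, ENNReal.ofReal (Real.exp (-α * u (Y.1 ω))) ∂μ) :
    ∀ a b k : ℝ, 0 ≤ a → 0 ≤ b → 0 ≤ k → k ≤ 1 →
      φ (k * a + (1 - k) * b) ≤ ENNReal.ofReal k * φ a + ENNReal.ofReal (1 - k) * φ b := by
  intro a b k ha hb hk0 hk1
  have hfeasible : Nonempty (budgetSet μ ρ y) :=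
    ⟨⟨_, const_mem_budgetSet μ ρ y hρint hρ1⟩⟩
  rw [hφ, hφ a, hφ b]
  refine ENNReal.le_mul_iInf_add_mul_iInf (ι := budgetSet μ ρ y) (κ := budgetSet μ ρ y)
    ENNReal.ofReal_ne_top ENNReal.ofReal_ne_top fun Y Y' => ?_
  obtain ⟨Z, hZ, hZle⟩ := hu.exists_mem_budgetSet_lintegral_exp_le ha hb hk0 hk1 Y.2 Y'.2
  exact iInf_le_of_le ⟨Z, hZ⟩ hZle

theorem stmt_16 (μ : Measure Ω) [IsProbabilityMeasure μ]
    (u : ℝ → ℝ) (hu : ConcaveOn ℝ Set.univ u) (humono : StrictMono u) (hu0 : u 0 = 0)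
    (ρ : Ω → ℝ) (hρm : Measurable ρ) (hρpos : ∀ᵐ ω ∂μ, 0 < ρ ω)
    (hρint : Integrable ρ μ) (hρ1 : ∫ ω, ρ ω ∂μ = 1)
    (y : ℝ) (hy : 0 < y)
    (φ : ℝ → ℝ≥0∞)
    (hφ : ∀ α : ℝ, φ α =
      ⨅ (Y : {Y : Ω → ℝ // Integrable Y μ ∧ Integrable (fun ω => ρ ω * Y ω) μ ∧
          (∫ ω, ρ ω * Y ω ∂μ) = -y}),
        ∫⁻ ω, ENNReal.ofReal (Real.exp (-α * u (Y.1 ω))) ∂μ) :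
    ∀ a b k : ℝ, 0 ≤ a → 0 ≤ b → 0 ≤ k → k ≤ 1 →
      φ (k * a + (1 - k) * b) ≤ ENNReal.ofReal k * φ a + ENNReal.ofReal (1 - k) * φ b :=
  stmt_16_general μ u hu ρ hρint hρ1 y φ hφ
end

section
/- Let $u: \mathbb{R}\to\mathbb{R}$ be concave, differentiable, with $u(0)=0$, and let $\rho > 0$ satisfy $\mathbb{E}[\rho]=1$ and $\mathbb{E}[\rho\ln\rho]<\infty$. Fix $y > 0$ and $\alpha > 0$. Then for every integrable $Y$ with $\mathbb{E}[\rho Y] = -y$, $\mathbb{E}[e^{-\alpha u(Y)}] \geq e^{\alpha u'(0) y - \mathbb{E}[\rho\ln\rho]}$. -/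
/-! Concavity and `u 0 = 0` give `u x ≤ u'(0) x`, so `e^{-α u(Y)} ≥ e^{-β Y}` with
`β = α u'(0)`. The bound is then the Donsker–Varadhan inequality
`log 𝔼[e^X] ≥ 𝔼[ρ X] - 𝔼[ρ log ρ]` (the right side is `𝔼_Q[X] - KL(Q ‖ P)` for `dQ = ρ dP`),
applied to `X = -β Y`, whose `ρ`-mean is `β y`. -/

open MeasureTheory ENNReal Real Filter

variable {Ω : Type*} [MeasurableSpace Ω]

lemma ConcaveOn.le_add_deriv_mul_sub {u : ℝ → ℝ} (hu : ConcaveOn ℝ Set.univ u) {a : ℝ}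
    (hd : DifferentiableAt ℝ u a) (x : ℝ) : u x ≤ u a + deriv u a * (x - a) := by
  rcases lt_trichotomy x a with hxa | rfl | hax
  · have h := hu.deriv_le_slope (Set.mem_univ x) (Set.mem_univ a) hxa hd
    rw [slope_def_field, le_div_iff₀ (sub_pos.2 hxa)] at h
    linarith
  · simp
  · have h := hu.slope_le_deriv (Set.mem_univ a) (Set.mem_univ x) hax hd
    rw [slope_def_field, div_le_iff₀ (sub_pos.2 hax)] at h
    linarith

lemma Real.mul_sub_log_add_one_le_exp {a : ℝ} (ha : 0 < a) (x : ℝ) :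
    a * (x - Real.log a + 1) ≤ Real.exp x := by
  have h := mul_le_mul_of_nonneg_left (Real.add_one_le_exp (x - Real.log a)) ha.le
  rwa [Real.exp_sub, Real.exp_log ha, mul_div_cancel₀ _ ha.ne'] at h

lemma ofReal_integral_le_lintegral_ofReal {μ : Measure Ω} {f : Ω → ℝ} (hf : Integrable f μ) :
    ENNReal.ofReal (∫ ω, f ω ∂μ) ≤ ∫⁻ ω, ENNReal.ofReal (f ω) ∂μ := by
  calc ENNReal.ofReal (∫ ω, f ω ∂μ)
      ≤ ENNReal.ofReal (∫⁻ ω, ENNReal.ofReal (f ω) ∂μ).toReal := by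
        rw [integral_eq_lintegral_pos_part_sub_lintegral_neg_part hf]
        exact ENNReal.ofReal_le_ofReal (sub_le_self _ ENNReal.toReal_nonneg)
    _ ≤ ∫⁻ ω, ENNReal.ofReal (f ω) ∂μ := ENNReal.ofReal_toReal_le

/- With `c = exp (𝔼[ρ X] - 𝔼[ρ log ρ])`, the tangent line of `exp` at `log (c ρ)` gives
`e^X ≥ c ρ (X - log (c ρ) + 1)` pointwise, and the right side integrates to exactly `c`. -/
lemma ofReal_exp_integral_mul_sub_entropy_le_lintegral_exp {μ : Measure Ω} {ρ X : Ω → ℝ}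
    (hρpos : ∀ᵐ ω ∂μ, 0 < ρ ω) (hρint : Integrable ρ μ) (hρ1 : ∫ ω, ρ ω ∂μ = 1)
    (hent : Integrable (fun ω => ρ ω * Real.log (ρ ω)) μ)
    (hρX : Integrable (fun ω => ρ ω * X ω) μ) :
    ENNReal.ofReal (Real.exp ((∫ ω, ρ ω * X ω ∂μ) - ∫ ω, ρ ω * Real.log (ρ ω) ∂μ)) ≤
      ∫⁻ ω, ENNReal.ofReal (Real.exp (X ω)) ∂μ := by
  set c := Real.exp ((∫ ω, ρ ω * X ω ∂μ) - ∫ ω, ρ ω * Real.log (ρ ω) ∂μ) with hc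
  have hc_pos : 0 < c := Real.exp_pos _
  let h : Ω → ℝ := fun ω =>
    c * (ρ ω * X ω) - c * (ρ ω * Real.log (ρ ω)) + c * (1 - Real.log c) * ρ ω
  have h_int : Integrable h μ :=
    ((hρX.const_mul c).sub (hent.const_mul c)).add (hρint.const_mul _)
  have h_integral : ∫ ω, h ω ∂μ = c := by
    rw [integral_add (by exact (hρX.const_mul c).sub (hent.const_mul c)) (hρint.const_mul _),
      integral_sub (hρX.const_mul c) (hent.const_mul c), integral_const_mul, integral_const_mul,
      integral_const_mul, hρ1, hc, Real.log_exp]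
    ring
  have h_le : ∀ᵐ ω ∂μ, ENNReal.ofReal (h ω) ≤ ENNReal.ofReal (Real.exp (X ω)) := by
    filter_upwards [hρpos] with ω hρω
    refine ENNReal.ofReal_le_ofReal (le_of_eq_of_le ?_
      (Real.mul_sub_log_add_one_le_exp (mul_pos hc_pos hρω) (X ω)))
    rw [Real.log_mul hc_pos.ne' hρω.ne']
    ring
  calc ENNReal.ofReal c = ENNReal.ofReal (∫ ω, h ω ∂μ) := by rw [h_integral]
    _ ≤ ∫⁻ ω, ENNReal.ofReal (h ω) ∂μ := ofReal_integral_le_lintegral_ofReal h_int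
    _ ≤ ∫⁻ ω, ENNReal.ofReal (Real.exp (X ω)) ∂μ := lintegral_mono_ae h_le

theorem stmt_18_general (μ : Measure Ω)
    (u : ℝ → ℝ) (hu : ConcaveOn ℝ Set.univ u)
    (hdiff : Differentiable ℝ u) (hu0 : u 0 = 0)
    (ρ : Ω → ℝ) (hρpos : ∀ᵐ ω ∂μ, 0 < ρ ω)
    (hρint : Integrable ρ μ) (hρ1 : ∫ ω, ρ ω ∂μ = 1)
    (hent : Integrable (fun ω => ρ ω * Real.log (ρ ω)) μ)
    (y : ℝ) (α : ℝ) (hα : 0 < α)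
    (Y : Ω → ℝ) (hρY : Integrable (fun ω => ρ ω * Y ω) μ)
    (hbudget : (∫ ω, ρ ω * Y ω ∂μ) = -y) :
    ENNReal.ofReal (Real.exp (α * deriv u 0 * y - ∫ ω, ρ ω * Real.log (ρ ω) ∂μ)) ≤
      ∫⁻ ω, ENNReal.ofReal (Real.exp (-α * u (Y ω))) ∂μ := by
  set β := α * deriv u 0
  have hρX : Integrable (fun ω => ρ ω * (-β * Y ω)) μ := by
    simpa only [mul_left_comm] using hρY.const_mul (-β)
  have h_mean : ∫ ω, ρ ω * (-β * Y ω) ∂μ = β * y := by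
    simp only [mul_left_comm (ρ _), integral_const_mul, hbudget]
    ring
  have h_tangent (t : ℝ) : -β * t ≤ -α * u t := by
    have h := hu.le_add_deriv_mul_sub (hdiff 0) t
    rw [hu0, zero_add, sub_zero] at h
    linarith [mul_le_mul_of_nonneg_left h hα.le]
  calc ENNReal.ofReal (Real.exp (β * y - ∫ ω, ρ ω * Real.log (ρ ω) ∂μ))
      ≤ ∫⁻ ω, ENNReal.ofReal (Real.exp (-β * Y ω)) ∂μ := by
        rw [← h_mean]
        exact ofReal_exp_integral_mul_sub_entropy_le_lintegral_exp hρpos hρint hρ1 hent hρX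
    _ ≤ ∫⁻ ω, ENNReal.ofReal (Real.exp (-α * u (Y ω))) ∂μ :=
        lintegral_mono fun ω => ENNReal.ofReal_le_ofReal (Real.exp_le_exp.2 (h_tangent (Y ω)))

theorem stmt_18 (μ : Measure Ω) [IsProbabilityMeasure μ]
    (u : ℝ → ℝ) (hu : ConcaveOn ℝ Set.univ u) (humono : StrictMono u)
    (hdiff : Differentiable ℝ u) (hu0 : u 0 = 0)
    (ρ : Ω → ℝ) (hρm : Measurable ρ) (hρpos : ∀ᵐ ω ∂μ, 0 < ρ ω)
    (hρint : Integrable ρ μ) (hρ1 : ∫ ω, ρ ω ∂μ = 1)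
    (hent : Integrable (fun ω => ρ ω * Real.log (ρ ω)) μ)
    (y : ℝ) (hy : 0 < y) (α : ℝ) (hα : 0 < α)
    (Y : Ω → ℝ) (hYint : Integrable Y μ) (hρY : Integrable (fun ω => ρ ω * Y ω) μ)
    (hbudget : (∫ ω, ρ ω * Y ω ∂μ) = -y) :
    ENNReal.ofReal (Real.exp (α * deriv u 0 * y - ∫ ω, ρ ω * Real.log (ρ ω) ∂μ)) ≤
      ∫⁻ ω, ENNReal.ofReal (Real.exp (-α * u (Y ω))) ∂μ :=
  stmt_18_general μ u hu hdiff hu0 ρ hρpos hρint hρ1 hent y α hα Y hρY hbudget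
end
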